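/- arXiv:1706.05314 — 4 statements merged into one kernel-verified Lean document; each statement's English description precedes it below -/
import Mathlib

section
/- Suppose |h01|^2 < |h02|^2, all positive, and σ^2 = 1. Define Z1(P1) = log2(1 + (|h01|^2*P1 + c1)/(|h01|^2*(Pcen-P1) + 1)), Z2(P1) = log2(1 + (|h02|^2*P1 + c2)/(|h02|^2*(Pcen-P1) + 1)) with c1, c2 ≥ 0, and R2(P1) = log2(1 + |h02|^2*(Pcen-P1)). Then the sum min(Z1(P1), Z2(P1)) + R2(P1) is non-increasing in P1 on [0, Pcen]. -/
/-- Lemma 3: with `0 < |h01|² < |h02|²` and `σ² = 1`, the sum-rate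
`min (Z1 P1) (Z2 P1) + R2 P1` is non-increasing in `P1` on `[0, Pcen]`. -/
theorem stmt_4 (h01sq h02sq Pcen c1 c2 : ℝ)
    (h1 : 0 < h01sq) (h12 : h01sq < h02sq) (hc1 : 0 ≤ c1) (hc2 : 0 ≤ c2) (hP : 0 < Pcen) :
    AntitoneOn (fun P1 : ℝ =>
        min (Real.logb 2 (1 + (h01sq * P1 + c1) / (h01sq * (Pcen - P1) + 1)))
            (Real.logb 2 (1 + (h02sq * P1 + c2) / (h02sq * (Pcen - P1) + 1)))
        + Real.logb 2 (1 + h02sq * (Pcen - P1)))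
      (Set.Icc 0 Pcen) := by
  intro x hx y hy hxy
  obtain ⟨hx0, hxP⟩ := hx
  obtain ⟨hy0, hyP⟩ := hy
  have hb : 0 < h02sq := h1.trans h12
  have hD1x : 0 < h01sq * (Pcen - x) + 1 := by nlinarith
  have hD1y : 0 < h01sq * (Pcen - y) + 1 := by nlinarith
  have hD2x : 0 < h02sq * (Pcen - x) + 1 := by nlinarith
  have hD2y : 0 < h02sq * (Pcen - y) + 1 := by nlinarith
  have hK1 : 0 < h01sq * Pcen + c1 + 1 := by nlinarith
  have hK2 : 0 < h02sq * Pcen + c2 + 1 := by nlinarith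
  have e1x : 1 + (h01sq * x + c1) / (h01sq * (Pcen - x) + 1)
      = (h01sq * Pcen + c1 + 1) / (h01sq * (Pcen - x) + 1) := by
    field_simp; ring
  have e1y : 1 + (h01sq * y + c1) / (h01sq * (Pcen - y) + 1)
      = (h01sq * Pcen + c1 + 1) / (h01sq * (Pcen - y) + 1) := by
    field_simp; ring
  have e2x : 1 + (h02sq * x + c2) / (h02sq * (Pcen - x) + 1)
      = (h02sq * Pcen + c2 + 1) / (h02sq * (Pcen - x) + 1) := by
    field_simp; ring
  have e2y : 1 + (h02sq * y + c2) / (h02sq * (Pcen - y) + 1)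
      = (h02sq * Pcen + c2 + 1) / (h02sq * (Pcen - y) + 1) := by
    field_simp; ring
  have e3x : 1 + h02sq * (Pcen - x) = h02sq * (Pcen - x) + 1 := by ring
  have e3y : 1 + h02sq * (Pcen - y) = h02sq * (Pcen - y) + 1 := by ring
  simp only [e1x, e1y, e2x, e2y, e3x, e3y]
  rw [← min_add_add_right, ← min_add_add_right]
  apply min_le_min
  · -- Z1 + R2 is nonincreasing
    rw [← Real.logb_mul (by positivity) (by positivity),
        ← Real.logb_mul (by positivity) (by positivity)]
    apply Real.logb_le_logb_of_le one_lt_two (by positivity)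
    rw [div_mul_eq_mul_div, div_mul_eq_mul_div,
        div_le_div_iff₀ hD1y hD1x]
    nlinarith [mul_nonneg (sub_nonneg.2 h12.le) (sub_nonneg.2 hxy)]
  · -- Z2 + R2 is constant
    rw [← Real.logb_mul (by positivity) (by positivity),
        ← Real.logb_mul (by positivity) (by positivity),
        div_mul_cancel₀ _ hD2y.ne', div_mul_cancel₀ _ hD2x.ne']
end

section
/- With σ^2 = 1 and 0 < |h01|^2 < |h02|^2, for all P1 ∈ [0, Pcen]: d/dP1 [log2(1 + (|h01|^2*P1 + c1)/(|h01|^2*(Pcen - P1) + 1)) + log2(1 + |h02|^2*(Pcen - P1))] = (1/ln 2) * (|h01|^2 - |h02|^2) / ((|h02|^2*(Pcen - P1) + 1)*(|h01|^2*(Pcen - P1) + 1)) < 0. -/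
/-!
The weak user's SINR term simplifies to `1 + (a p + c) / (a (P - p) + 1) = (a P + 1 + c) / (a (P - p) + 1)`,
whose numerator is constant; so in units of `1 / log 2` its rate grows at `a / (a (P - p) + 1)` while the
strong user's rate `logb 2 (1 + b (P - p))` falls at `b / (b (P - p) + 1)`. The net slope is
`(a - b) / ((b (P - p) + 1) (a (P - p) + 1))`, negative because `a < b`.
-/

open Real

theorem HasDerivAt.logb {f : ℝ → ℝ} {f' x : ℝ} (b : ℝ) (hf : HasDerivAt f f' x) (hx : f x ≠ 0) :
    HasDerivAt (fun y => Real.logb b (f y)) (f' / (f x * Real.log b)) x := by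
  simpa only [Real.logb, div_div] using (hf.log hx).div_const (Real.log b)

theorem hasDerivAt_logb_one_add_mul_sub (b β P p : ℝ) (hw : 1 + β * (P - p) ≠ 0) :
    HasDerivAt (fun p => logb b (1 + β * (P - p))) (-β / ((1 + β * (P - p)) * log b)) p := by
  simpa using HasDerivAt.logb b ((((hasDerivAt_id p).const_sub P).const_mul β).const_add 1) hw

theorem hasDerivAt_logb_one_add_div (b a c P p : ℝ) (hv : a * (P - p) + 1 ≠ 0)
    (hK : a * P + 1 + c ≠ 0) :
    HasDerivAt (fun p => logb b (1 + (a * p + c) / (a * (P - p) + 1)))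
      (a / ((a * (P - p) + 1) * log b)) p := by
  have hnum : HasDerivAt (fun p => a * p + c) a p := by
    simpa using ((hasDerivAt_id p).const_mul a).add_const c
  have hden : HasDerivAt (fun p => a * (P - p) + 1) (-a) p := by
    simpa using (((hasDerivAt_id p).const_sub P).const_mul a).add_const 1
  have hsinr : 1 + (a * p + c) / (a * (P - p) + 1) = (a * P + 1 + c) / (a * (P - p) + 1) := by
    field_simp
    ring
  convert HasDerivAt.logb b ((hnum.fun_div hden hv).const_add 1) (by rw [hsinr]; exact div_ne_zero hK hv)
    using 1
  rw [hsinr]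
  field_simp
  ring

theorem stmt_5_general (h01sq h02sq Pcen c1 : ℝ)
    (h1 : 0 < h01sq) (h12 : h01sq < h02sq) (hc1 : 0 ≤ c1) :
    ∀ P1 ∈ Set.Icc (0:ℝ) Pcen,
      HasDerivAt (fun p : ℝ =>
          Real.logb 2 (1 + (h01sq * p + c1) / (h01sq * (Pcen - p) + 1))
          + Real.logb 2 (1 + h02sq * (Pcen - p)))
        ((1 / Real.log 2) * (h01sq - h02sq) /
          ((h02sq * (Pcen - P1) + 1) * (h01sq * (Pcen - P1) + 1))) P1
      ∧ (1 / Real.log 2) * (h01sq - h02sq) /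
          ((h02sq * (Pcen - P1) + 1) * (h01sq * (Pcen - P1) + 1)) < 0 := by
  rintro P1 ⟨hP1, hP1P⟩
  have hv : 0 < h01sq * (Pcen - P1) + 1 := by nlinarith
  have hw : 0 < h02sq * (Pcen - P1) + 1 := by nlinarith
  have hK : 0 < h01sq * Pcen + 1 + c1 := by nlinarith
  have hlog2 : 0 < log 2 := log_pos one_lt_two
  refine ⟨?_, div_neg_of_neg_of_pos ?_ (by positivity)⟩
  · refine ((hasDerivAt_logb_one_add_div 2 h01sq c1 Pcen P1 hv.ne' hK.ne').fun_add
      (hasDerivAt_logb_one_add_mul_sub 2 h02sq Pcen P1 (by linarith))).congr_deriv ?_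
    rw [add_comm 1 (h02sq * _), div_add_div _ _ (by positivity) (by positivity),
      div_eq_div_iff (by positivity) (by positivity)]
    field_simp
    ring
  · exact mul_neg_of_pos_of_neg (by positivity) (by linarith)

/-- Derivative computation in the proof of Lemma 3:
`d/dP1 [Z1 + R2] = (1/ln 2) (|h01|² - |h02|²) / ((|h02|²(Pcen-P1)+1)(|h01|²(Pcen-P1)+1)) < 0`. -/
theorem stmt_5 (h01sq h02sq Pcen c1 : ℝ)
    (h1 : 0 < h01sq) (h12 : h01sq < h02sq) (hc1 : 0 ≤ c1) (hP : 0 < Pcen) :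
    ∀ P1 ∈ Set.Icc (0:ℝ) Pcen,
      HasDerivAt (fun p : ℝ =>
          Real.logb 2 (1 + (h01sq * p + c1) / (h01sq * (Pcen - p) + 1))
          + Real.logb 2 (1 + h02sq * (Pcen - p)))
        ((1 / Real.log 2) * (h01sq - h02sq) /
          ((h02sq * (Pcen - P1) + 1) * (h01sq * (Pcen - P1) + 1))) P1
      ∧ (1 / Real.log 2) * (h01sq - h02sq) /
          ((h02sq * (Pcen - P1) + 1) * (h01sq * (Pcen - P1) + 1)) < 0 :=
  stmt_5_general h01sq h02sq Pcen c1 h1 h12 hc1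
end

section
/- Let X, Y be independent exponential random variables with rates 1, and let a ≠ b with a, b > 0. Then E[log2(1 + aX + bY)] = (a/(a-b)) * C1(a) + (b/(b-a)) * C1(b), where C1(x) = (e^{1/x}/ln 2) * E1(1/x) and E1 is the exponential integral. -/
open MeasureTheory Real

/-- The exponential integral `E1(x) = ∫₁^∞ e^{-xt}/t dt`. -/
noncomputable def expInt (x : ℝ) : ℝ := ∫ t in Set.Ioi (1:ℝ), Real.exp (-x * t) / t

/-- The ergodic capacity function `C1(x) = (e^{1/x}/ln 2) E1(1/x)`. -/
noncomputable def C1 (x : ℝ) : ℝ := Real.exp (1 / x) / Real.log 2 * expInt (1 / x)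

/-!
Write `I(a, b) = 𝔼 log₂(1 + aX + bY)` and `G(a, b) = 𝔼[1 / (1 + aX + bY)]`. Integrating by parts
in `y` gives `I(a, b) = C1(a) + b G(a, b) / ln 2`, where `C1(a)` appears as `𝔼 log₂(1 + aX)` after
the substitution `t = 1 + a x` in `E1`. Both `I` and `G` are symmetric in `(a, b)` (swap `X` and
`Y`), so comparing the identities for `(a, b)` and `(b, a)` eliminates `G`:
`(a - b) I(a, b) = a C1(a) - b C1(b)`.
-/

open Set Filter Topology

theorem integral_comp_add_right_Ioi {E : Type*} [NormedAddCommGroup E] [NormedSpace ℝ E]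
    (g : ℝ → E) (a d : ℝ) : ∫ x in Ioi a, g (x + d) = ∫ x in Ioi (a + d), g x := by
  simpa [preimage_add_const_Ioi] using
    (measurePreserving_add_right volume d).setIntegral_preimage_emb
      (measurableEmbedding_addRight d) g (Ioi (a + d))

theorem integrableOn_one_add_mul_exp_neg :
    IntegrableOn (fun x : ℝ => (1 + x) * exp (-x)) (Ioi 0) := by
  have h0 : IntegrableOn (fun x : ℝ => exp (-x)) (Ioi 0) := by
    simpa using exp_neg_integrableOn_Ioi 0 one_pos
  have h1 := GammaIntegral_convergent (s := 2) two_pos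
  norm_num at h1
  refine (h0.add h1).congr_fun (fun x _ => ?_) measurableSet_Ioi
  simp only [Pi.add_apply]
  ring

theorem tendsto_one_add_mul_exp_neg_atTop :
    Tendsto (fun x : ℝ => (1 + x) * exp (-x)) atTop (𝓝 0) := by
  have h := tendsto_exp_neg_atTop_nhds_zero.add (tendsto_pow_mul_exp_neg_atTop_nhds_zero 1)
  simpa [add_mul] using h

theorem abs_log_add_mul_le {r c y : ℝ} (hr : 0 < r) (hc : 0 ≤ c) (hy : 0 ≤ y) :
    |log (r + c * y)| ≤ |log r| + c / r * y := by
  have hlower : log r ≤ log (r + c * y) := log_le_log hr (by nlinarith)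
  have hupper : log (r + c * y) ≤ log r + c / r * y := by
    have h := log_le_sub_one_of_pos (x := (r + c * y) / r) (by positivity)
    rw [log_div (by positivity) hr.ne'] at h
    have : (r + c * y) / r - 1 = c / r * y := by field_simp; ring
    linarith
  rw [abs_le]
  constructor <;> linarith [neg_abs_le (log r), le_abs_self (log r), div_nonneg hc hr.le,
    mul_nonneg (div_nonneg hc hr.le) hy]

theorem abs_log_add_mul_mul_exp_neg_le {r c y : ℝ} (hr : 0 < r) (hc : 0 ≤ c) (hy : 0 ≤ y) :
    |log (r + c * y) * exp (-y)| ≤ (|log r| + c / r) * ((1 + y) * exp (-y)) := by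
  rw [abs_mul, abs_of_pos (exp_pos _), ← mul_assoc]
  gcongr
  nlinarith [abs_log_add_mul_le hr hc hy, abs_nonneg (log r), div_nonneg hc hr.le]

theorem integrableOn_Ioi_of_abs_le_one_add_mul_exp_neg {f : ℝ → ℝ}
    (hf : AEStronglyMeasurable f (volume.restrict (Ioi 0))) (K : ℝ)
    (hle : ∀ y > 0, |f y| ≤ K * ((1 + y) * exp (-y))) : IntegrableOn f (Ioi 0) :=
  (integrableOn_one_add_mul_exp_neg.const_mul K).mono' hf <|
    (ae_restrict_mem measurableSet_Ioi).mono hle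

theorem integrableOn_log_add_mul_mul_exp_neg {r c : ℝ} (hr : 0 < r) (hc : 0 ≤ c) :
    IntegrableOn (fun y => log (r + c * y) * exp (-y)) (Ioi 0) :=
  integrableOn_Ioi_of_abs_le_one_add_mul_exp_neg (by fun_prop) (|log r| + c / r)
    fun y hy => abs_log_add_mul_mul_exp_neg_le hr hc hy.le

theorem integrableOn_exp_neg_div_add_mul {r c : ℝ} (hr : 0 < r) (hc : 0 ≤ c) :
    IntegrableOn (fun y => exp (-y) / (r + c * y)) (Ioi 0) := by
  refine integrableOn_Ioi_of_abs_le_one_add_mul_exp_neg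
    (Measurable.aestronglyMeasurable (by fun_prop)) r⁻¹ fun y hy => ?_
  have hden : r ≤ r + c * y := by nlinarith [hy.le]
  rw [abs_of_nonneg (div_nonneg (exp_pos _).le (by linarith))]
  calc exp (-y) / (r + c * y) ≤ exp (-y) / r := by gcongr
    _ ≤ r⁻¹ * ((1 + y) * exp (-y)) := by
      rw [div_eq_inv_mul]; gcongr; nlinarith [exp_pos (-y), hy.le]

theorem integral_log_add_mul_mul_exp_neg {r c : ℝ} (hr : 0 < r) (hc : 0 ≤ c) :
    ∫ y in Ioi 0, log (r + c * y) * exp (-y)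
      = log r + c * ∫ y in Ioi 0, exp (-y) / (r + c * y) := by
  have hderiv : ∀ y ∈ Ici (0 : ℝ), HasDerivAt (fun y => -(exp (-y) * log (r + c * y)))
      (log (r + c * y) * exp (-y) - c * (exp (-y) / (r + c * y))) y := by
    intro y hy
    have hpos : 0 < r + c * y := by nlinarith [mem_Ici.mp hy]
    have hlin : HasDerivAt (fun y => r + c * y) c y := by
      simpa using ((hasDerivAt_id y).const_mul c).const_add r
    exact (((hasDerivAt_neg y).exp).mul (hlin.log hpos.ne')).neg.congr_deriv (by ring)
  have htend : Tendsto (fun y => -(exp (-y) * log (r + c * y))) atTop (𝓝 0) := by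
    refine squeeze_zero_norm' ?_
      (by simpa using tendsto_one_add_mul_exp_neg_atTop.const_mul (|log r| + c / r))
    filter_upwards [eventually_ge_atTop 0] with y hy
    rw [norm_neg, norm_eq_abs, mul_comm]
    exact abs_log_add_mul_mul_exp_neg_le hr hc hy
  have hlog := integrableOn_log_add_mul_mul_exp_neg hr hc
  have hinv := (integrableOn_exp_neg_div_add_mul hr hc).const_mul c
  have h := integral_Ioi_of_hasDerivAt_of_tendsto' hderiv (hlog.sub hinv) htend
  rw [integral_sub hlog hinv, integral_const_mul] at h
  simp only [neg_zero, exp_zero, mul_zero, add_zero, one_mul, sub_neg_eq_add, zero_add] at h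
  linarith

theorem integral_exp_neg_div_one_add_mul {c : ℝ} (hc : 0 < c) :
    ∫ x in Ioi 0, exp (-x) / (1 + c * x) = exp (1 / c) / c * expInt (1 / c) := by
  have hsubst : expInt (1 / c) = c * exp (-(1 / c)) * ∫ x in Ioi 0, exp (-x) / (1 + c * x) :=
    calc expInt (1 / c) = ∫ u in Ioi 0, exp (-(1 / c) * (u + 1)) / (u + 1) := by
          rw [expInt, integral_comp_add_right_Ioi (fun t : ℝ => exp (-(1 / c) * t) / t), zero_add]
      _ = c * ∫ x in Ioi 0, exp (-(1 / c) * (c * x + 1)) / (c * x + 1) := by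
          rw [integral_comp_mul_left_Ioi (fun u : ℝ => exp (-(1 / c) * (u + 1)) / (u + 1)) 0 hc,
            mul_zero, smul_eq_mul, mul_inv_cancel_left₀ hc.ne']
      _ = c * exp (-(1 / c)) * ∫ x in Ioi 0, exp (-x) / (1 + c * x) := by
          rw [mul_assoc, ← integral_const_mul (exp (-(1 / c)))]
          congr 1
          refine setIntegral_congr_fun measurableSet_Ioi fun x _ => ?_
          rw [show -(1 / c) * (c * x + 1) = -(1 / c) + -x by field_simp; ring, exp_add]
          ring
  rw [hsubst, exp_neg]
  generalize ∫ x in Ioi 0, exp (-x) / (1 + c * x) = I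
  field_simp

theorem integral_log_one_add_mul_mul_exp_neg {c : ℝ} (hc : 0 < c) :
    ∫ x in Ioi 0, log (1 + c * x) * exp (-x) = log 2 * C1 c := by
  rw [integral_log_add_mul_mul_exp_neg one_pos hc.le, integral_exp_neg_div_one_add_mul hc, C1,
    log_one, zero_add]
  field_simp

theorem integrable_prod_Ioi_of_abs_le {f : ℝ × ℝ → ℝ} (hf : Measurable f) (K : ℝ)
    (hle : ∀ x > 0, ∀ y > 0, |f (x, y)| ≤ K * ((1 + x) * exp (-x) * ((1 + y) * exp (-y)))) :
    Integrable f ((volume.restrict (Ioi 0)).prod (volume.restrict (Ioi 0))) := by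
  refine ((integrableOn_one_add_mul_exp_neg.mul_prod integrableOn_one_add_mul_exp_neg).const_mul
    K).mono' hf.aestronglyMeasurable ?_
  rw [Measure.prod_restrict]
  filter_upwards [ae_restrict_mem (measurableSet_Ioi.prod measurableSet_Ioi)] with p hp
  exact hle p.1 hp.1 p.2 hp.2

theorem integrable_logb_one_add_mul_add_mul_mul_exp_neg {a b : ℝ} (ha : 0 ≤ a) (hb : 0 ≤ b) :
    Integrable (fun p : ℝ × ℝ => logb 2 (1 + a * p.1 + b * p.2) * (exp (-p.1) * exp (-p.2)))
      ((volume.restrict (Ioi 0)).prod (volume.restrict (Ioi 0))) := by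
  refine integrable_prod_Ioi_of_abs_le (by simp only [logb]; fun_prop) ((a + b) / log 2)
    fun x hx y hy => ?_
  have hone : 1 ≤ 1 + a * x + b * y := by nlinarith
  have hlog : log (1 + a * x + b * y) ≤ (a + b) * ((1 + x) * (1 + y)) := by
    nlinarith [log_le_sub_one_of_pos (x := 1 + a * x + b * y) (by linarith),
      mul_nonneg ha hy.le, mul_nonneg hb hx.le, mul_nonneg (mul_nonneg ha hx.le) hy.le,
      mul_nonneg (mul_nonneg hb hx.le) hy.le]
  rw [logb, abs_of_nonneg
    (mul_nonneg (div_nonneg (log_nonneg hone) (log_nonneg one_le_two)) (by positivity))]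
  calc log (1 + a * x + b * y) / log 2 * (exp (-x) * exp (-y))
      ≤ (a + b) * ((1 + x) * (1 + y)) / log 2 * (exp (-x) * exp (-y)) := by
        gcongr
    _ = _ := by ring

theorem integrable_exp_neg_mul_exp_neg_div_one_add_mul_add_mul {a b : ℝ} (ha : 0 ≤ a)
    (hb : 0 ≤ b) :
    Integrable (fun p : ℝ × ℝ => exp (-p.1) * exp (-p.2) / (1 + a * p.1 + b * p.2))
      ((volume.restrict (Ioi 0)).prod (volume.restrict (Ioi 0))) := by
  refine integrable_prod_Ioi_of_abs_le (by fun_prop) 1 fun x hx y hy => ?_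
  have hone : 1 ≤ 1 + a * x + b * y := by nlinarith
  rw [abs_of_nonneg (by positivity)]
  calc exp (-x) * exp (-y) / (1 + a * x + b * y) ≤ exp (-x) * exp (-y) :=
        div_le_self (by positivity) hone
    _ ≤ 1 * ((1 + x) * exp (-x) * ((1 + y) * exp (-y))) := by
      rw [one_mul, mul_mul_mul_comm]
      exact le_mul_of_one_le_left (by positivity) (by nlinarith)

noncomputable def logbIntegral (a b : ℝ) : ℝ :=
  ∫ x in Ioi (0 : ℝ), ∫ y in Ioi (0 : ℝ), logb 2 (1 + a * x + b * y) * (exp (-x) * exp (-y))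

noncomputable def invIntegral (a b : ℝ) : ℝ :=
  ∫ x in Ioi (0 : ℝ), ∫ y in Ioi (0 : ℝ), exp (-x) * exp (-y) / (1 + a * x + b * y)

theorem logbIntegral_comm {a b : ℝ} (ha : 0 ≤ a) (hb : 0 ≤ b) :
    logbIntegral a b = logbIntegral b a := by
  rw [logbIntegral, integral_integral_swap (integrable_logb_one_add_mul_add_mul_mul_exp_neg ha hb)]
  refine integral_congr_ae (ae_of_all _ fun y => integral_congr_ae (ae_of_all _ fun x => ?_))
  ring_nf

theorem invIntegral_comm {a b : ℝ} (ha : 0 ≤ a) (hb : 0 ≤ b) :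
    invIntegral a b = invIntegral b a := by
  rw [invIntegral, integral_integral_swap
    (integrable_exp_neg_mul_exp_neg_div_one_add_mul_add_mul ha hb)]
  refine integral_congr_ae (ae_of_all _ fun y => integral_congr_ae (ae_of_all _ fun x => ?_))
  ring_nf

theorem logbIntegral_eq {a b : ℝ} (ha : 0 < a) (hb : 0 ≤ b) :
    logbIntegral a b = C1 a + b / log 2 * invIntegral a b := by
  have hinner : ∀ x ∈ Ioi (0 : ℝ),
      ∫ y in Ioi (0 : ℝ), logb 2 (1 + a * x + b * y) * (exp (-x) * exp (-y))
        = (log (1 + a * x) * exp (-x)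
          + b * ∫ y in Ioi (0 : ℝ), exp (-x) * exp (-y) / (1 + a * x + b * y)) / log 2 := by
    intro x hx
    have hr : 0 < 1 + a * x := by nlinarith [mem_Ioi.mp hx]
    have hlog : ∫ y in Ioi (0 : ℝ), logb 2 (1 + a * x + b * y) * (exp (-x) * exp (-y))
        = exp (-x) / log 2 * ∫ y in Ioi (0 : ℝ), log (1 + a * x + b * y) * exp (-y) := by
      rw [← integral_const_mul]
      refine integral_congr_ae (ae_of_all _ fun y => ?_)
      simp only [logb]
      ring
    have hinv : ∫ y in Ioi (0 : ℝ), exp (-x) * exp (-y) / (1 + a * x + b * y)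
        = exp (-x) * ∫ y in Ioi (0 : ℝ), exp (-y) / (1 + a * x + b * y) := by
      rw [← integral_const_mul]
      refine integral_congr_ae (ae_of_all _ fun y => ?_)
      ring
    rw [hlog, hinv, integral_log_add_mul_mul_exp_neg hr hb]
    ring
  have hint_log := integrableOn_log_add_mul_mul_exp_neg one_pos ha.le
  have hint_inv :=
    (integrable_exp_neg_mul_exp_neg_div_one_add_mul_add_mul ha.le hb).integral_prod_left
  rw [logbIntegral, setIntegral_congr_fun measurableSet_Ioi hinner, integral_div,
    integral_add hint_log (hint_inv.const_mul b), integral_const_mul,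
    integral_log_one_add_mul_mul_exp_neg ha, invIntegral, add_div,
    mul_div_cancel_left₀ _ (log_pos one_lt_two).ne']
  ring

/-- For independent `X, Y ~ Exp(1)` and distinct `a, b > 0`,
`E[log2(1 + aX + bY)] = (a/(a-b)) C1(a) + (b/(b-a)) C1(b)`. -/
theorem stmt_10 (a b : ℝ) (ha : 0 < a) (hb : 0 < b) (hab : a ≠ b) :
    ∫ x in Set.Ioi (0:ℝ), ∫ y in Set.Ioi (0:ℝ),
        Real.logb 2 (1 + a * x + b * y) * (Real.exp (-x) * Real.exp (-y))
      = a / (a - b) * C1 a + b / (b - a) * C1 b := by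
  have hab' : a - b ≠ 0 := sub_ne_zero.mpr hab
  have h_ab := logbIntegral_eq ha hb.le
  have h_ba := logbIntegral_eq hb ha.le
  rw [← logbIntegral_comm ha.le hb.le, ← invIntegral_comm ha.le hb.le] at h_ba
  have key : (a - b) * logbIntegral a b = a * C1 a - b * C1 b := by
    linear_combination a * h_ab - b * h_ba
  calc logbIntegral a b = (a - b) * logbIntegral a b / (a - b) := (mul_div_cancel_left₀ _ hab').symm
    _ = a / (a - b) * C1 a + b / (b - a) * C1 b := by
      rw [key, ← neg_sub a b, div_neg]
      ring
end

section
/- Suppose 0 < |h01|^2 < |h02|^2, σ^2 = 1, and define R1(P1) = min(Z1(P1), Z2(P1)) (increasing, with Z1, Z2 as in NOMA-DAS) and R2(P1) = log2(1 + |h02|^2 (Pcen - P1)) and Rt > 0. If the solution P_{R1} of R1(P1) = Rt satisfies P_{R1} ∈ [0, Pcen] and R2(P_{R1}) ≥ Rt, then P_{R1} maximizes R1(P1) + R2(P1) subject to min(R1(P1), R2(P1)) ≥ Rt over P1 ∈ [0, Pcen]. -/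
/-- Theorem 2 (max-sum-rate under QoS): with `0 < |h01|² < |h02|²`, `σ² = 1`,
`R1 = min(Z1, Z2)` and `R2(P1) = log2(1 + |h02|²(Pcen - P1))`, if `P_{R1} ∈ [0, Pcen]`
solves `R1(P_{R1}) = Rt` and `R2(P_{R1}) ≥ Rt`, then `P_{R1}` maximizes `R1 + R2`
subject to `min(R1, R2) ≥ Rt` on `[0, Pcen]`. -/
theorem stmt_14 (h01sq h02sq Pcen c1 c2 Rt PR1 : ℝ)
    (h1 : 0 < h01sq) (h12 : h01sq < h02sq) (hc1 : 0 ≤ c1) (hc2 : 0 ≤ c2)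
    (hP : 0 < Pcen) (hRt : 0 < Rt)
    (Z1 : ℝ → ℝ) (Z2 : ℝ → ℝ) (R1 : ℝ → ℝ) (R2 : ℝ → ℝ)
    (hZ1 : Z1 = fun P1 => Real.logb 2 (1 + (h01sq * P1 + c1) / (h01sq * (Pcen - P1) + 1)))
    (hZ2 : Z2 = fun P1 => Real.logb 2 (1 + (h02sq * P1 + c2) / (h02sq * (Pcen - P1) + 1)))
    (hR1 : R1 = fun P1 => min (Z1 P1) (Z2 P1))
    (hR2 : R2 = fun P1 => Real.logb 2 (1 + h02sq * (Pcen - P1)))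
    (hPR1mem : PR1 ∈ Set.Icc (0:ℝ) Pcen)
    (hsol : R1 PR1 = Rt) (hfeas : Rt ≤ R2 PR1) :
    ∀ P1 ∈ Set.Icc (0:ℝ) Pcen, Rt ≤ min (R1 P1) (R2 P1) →
      R1 P1 + R2 P1 ≤ R1 PR1 + R2 PR1 := by
  obtain ⟨hPR0, hPRc⟩ := hPR1mem
  intro P1 hP1 hgoal
  obtain ⟨hP10, hP1c⟩ := hP1
  have h2 : (0:ℝ) < h02sq := h1.trans h12
  -- denominators are positive
  have hD1x : 0 < h01sq * (Pcen - P1) + 1 := by nlinarith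
  have hD1y : 0 < h01sq * (Pcen - PR1) + 1 := by nlinarith
  have hD2x : 0 < h02sq * (Pcen - P1) + 1 := by nlinarith
  have hD2y : 0 < h02sq * (Pcen - PR1) + 1 := by nlinarith
  have hC1 : 0 < h01sq * Pcen + 1 + c1 := by nlinarith
  have hC2 : 0 < h02sq * Pcen + 1 + c2 := by nlinarith
  -- rewrite Z1, Z2 as logb of a constant over denominator
  have hrw : ∀ h c x : ℝ, h * (Pcen - x) + 1 ≠ 0 →
      1 + (h * x + c) / (h * (Pcen - x) + 1)
        = (h * Pcen + 1 + c) / (h * (Pcen - x) + 1) := by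
    intro h c x hD
    field_simp
    ring
  have hZ1' : ∀ x : ℝ, h01sq * (Pcen - x) + 1 ≠ 0 →
      Z1 x = Real.logb 2 ((h01sq * Pcen + 1 + c1) / (h01sq * (Pcen - x) + 1)) := by
    intro x hD; rw [hZ1]; simp only; rw [hrw _ _ _ hD]
  have hZ2' : ∀ x : ℝ, h02sq * (Pcen - x) + 1 ≠ 0 →
      Z2 x = Real.logb 2 ((h02sq * Pcen + 1 + c2) / (h02sq * (Pcen - x) + 1)) := by
    intro x hD; rw [hZ2]; simp only; rw [hrw _ _ _ hD]
  have hR2' : ∀ x : ℝ, R2 x = Real.logb 2 (h02sq * (Pcen - x) + 1) := by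
    intro x; rw [hR2]; simp only [add_comm]
  -- Step 1 : PR1 ≤ P1
  have hle : PR1 ≤ P1 := by
    by_contra hlt
    push_neg at hlt
    have hZ1lt : Z1 P1 < Z1 PR1 := by
      rw [hZ1' _ hD1x.ne', hZ1' _ hD1y.ne']
      apply Real.logb_lt_logb one_lt_two (by positivity)
      exact div_lt_div_of_pos_left hC1 hD1y (by nlinarith)
    have hZ2lt : Z2 P1 < Z2 PR1 := by
      rw [hZ2' _ hD2x.ne', hZ2' _ hD2y.ne']
      apply Real.logb_lt_logb one_lt_two (by positivity)
      exact div_lt_div_of_pos_left hC2 hD2y (by nlinarith)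
    have : R1 P1 < R1 PR1 := by
      rw [hR1]; exact min_lt_min hZ1lt hZ2lt
    have hRtle : Rt ≤ R1 P1 := le_trans hgoal (min_le_left _ _)
    rw [hsol] at this
    linarith
  -- Step 2 : Z2 + R2 is constant
  have hZ2R2 : ∀ x : ℝ, h02sq * (Pcen - x) + 1 ≠ 0 → 0 < h02sq * (Pcen - x) + 1 →
      Z2 x + R2 x = Real.logb 2 (h02sq * Pcen + 1 + c2) := by
    intro x hD hDpos
    rw [hZ2' _ hD, hR2', Real.logb_div hC2.ne' hD]
    ring
  -- Step 3 : Z1 + R2 is antitone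
  have hZ1R2 : Z1 P1 + R2 P1 ≤ Z1 PR1 + R2 PR1 := by
    rw [hZ1' _ hD1x.ne', hZ1' _ hD1y.ne', hR2', hR2',
      Real.logb_div hC1.ne' hD1x.ne', Real.logb_div hC1.ne' hD1y.ne']
    have key : Real.logb 2 (h02sq * (Pcen - P1) + 1) + Real.logb 2 (h01sq * (Pcen - PR1) + 1)
        ≤ Real.logb 2 (h02sq * (Pcen - PR1) + 1) + Real.logb 2 (h01sq * (Pcen - P1) + 1) := by
      rw [← Real.logb_mul hD2x.ne' hD1y.ne', ← Real.logb_mul hD2y.ne' hD1x.ne']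
      apply Real.logb_le_logb_of_le one_lt_two (by positivity)
      nlinarith
    linarith
  have hcon : Z2 P1 + R2 P1 = Z2 PR1 + R2 PR1 := by
    rw [hZ2R2 _ hD2x.ne' hD2x, hZ2R2 _ hD2y.ne' hD2y]
  -- conclude
  rw [hR1]
  simp only
  rw [← min_add_add_right, ← min_add_add_right]
  exact min_le_min hZ1R2 (le_of_eq hcon)
end
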